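/- arXiv:1110.6430 — 5 statements merged into one kernel-verified Lean document; each statement's English description precedes it below -/
import Mathlib

section
/- For every positive integer n, 11·σ₉(n) = 21·σ₅(n) − 10·σ₃(n) + 5040 · Σ_{m=1}^{n-1} σ₃(m)σ₅(n−m), where σ_k(n) = Σ_{d|n} d^k. -/
/-!
The space of level-one modular forms of weight 10 is one-dimensional, so `E₄ E₆ = E₁₀`, the
scalar being fixed by the constant terms. The `q`-expansion coefficients `-2k σ_{k-1}(m) / B_k`
of `E_k` are `240 σ₃(m)`, `-504 σ₅(m)` and `-264 σ₉(m)` for `k = 4, 6, 10`; comparing the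
coefficients of `qⁿ` on both sides and dividing by `-24` gives the identity.
-/

open UpperHalfPlane ModularForm ModularFormClass MatrixGroups EisensteinSeries

lemma PowerSeries.coeff_mul_of_coeff_zero_eq_one {R : Type*} [Semiring R] {φ ψ : PowerSeries R}
    (hφ : coeff 0 φ = 1) (hψ : coeff 0 ψ = 1) {n : ℕ} (hn : 0 < n) :
    coeff n (φ * ψ) =
      coeff n ψ + ∑ m ∈ Finset.Ioo 0 n, coeff m φ * coeff (n - m) ψ + coeff n φ := by
  rw [coeff_mul, Finset.Nat.sum_antidiagonal_eq_sum_range_succ (fun i j => coeff i φ * coeff j ψ),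
    Finset.range_eq_Ico, Finset.sum_Ico_succ_top n.zero_le, Finset.sum_eq_sum_Ico_succ_bot hn,
    Finset.Ico_add_one_left_eq_Ioo, Nat.sub_self, Nat.sub_zero, hφ, hψ, one_mul, mul_one]

namespace ModularForm

noncomputable abbrev E₁₀ : ModularForm 𝒮ℒ 10 := E (by norm_num : 3 ≤ 10)

lemma levelOne_weight_ten_finrank_one : Module.finrank ℂ (ModularForm 𝒮ℒ 10) = 1 :=
  Module.rank_eq_one_iff_finrank_eq_one.mp <| by
    simpa [Nat.ModEq] using dimension_level_one 10 ⟨5, rfl⟩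

lemma E₄_mul_E₆ : ⇑(E₄.mul E₆) = E₁₀ := by
  obtain ⟨c, hc⟩ := (finrank_eq_one_iff_of_nonzero' E₁₀ (E_ne_zero _ ⟨5, rfl⟩)).mp
    levelOne_weight_ten_finrank_one (mcast (by norm_num) (E₄.mul E₆))
  replace hc : c • ⇑E₁₀ = E₄.mul E₆ := by simpa using congrArg DFunLike.coe hc
  have hc₁ : c = 1 := by
    have hq := congrArg (PowerSeries.coeff 0)
      (ModularForm.qExpansion_smul one_pos one_mem_strictPeriods_SL c E₁₀)
    rw [hc, ModularForm.qExpansion_mul one_pos one_mem_strictPeriods_SL, PowerSeries.coeff_smul,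
      PowerSeries.coeff_mul, Finset.Nat.antidiagonal_zero, Finset.sum_singleton,
      E_qExpansion_coeff_zero _ ⟨2, rfl⟩, E_qExpansion_coeff_zero _ ⟨3, rfl⟩,
      E_qExpansion_coeff_zero _ ⟨5, rfl⟩] at hq
    simpa using hq.symm
  rw [← hc, hc₁, one_smul]

lemma E₄_qExpansion_coeff {m : ℕ} (hm : 0 < m) :
    (qExpansion 1 E₄).coeff m = 240 * ArithmeticFunction.sigma 3 m := by
  norm_num [E_qExpansion_coeff _ ⟨2, rfl⟩, hm.ne', show bernoulli 4 = -1 / 30 by decide +kernel]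

lemma E₆_qExpansion_coeff {m : ℕ} (hm : 0 < m) :
    (qExpansion 1 E₆).coeff m = -504 * ArithmeticFunction.sigma 5 m := by
  norm_num [E_qExpansion_coeff _ ⟨3, rfl⟩, hm.ne', show bernoulli 6 = 1 / 42 by decide +kernel]

lemma E₁₀_qExpansion_coeff {m : ℕ} (hm : 0 < m) :
    (qExpansion 1 E₁₀).coeff m = -264 * ArithmeticFunction.sigma 9 m := by
  norm_num [E_qExpansion_coeff _ ⟨5, rfl⟩, hm.ne', show bernoulli 10 = 5 / 66 by decide +kernel]

end ModularForm

/-- For every positive integer `n`,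
`11 σ₉(n) = 21 σ₅(n) − 10 σ₃(n) + 5040 ∑_{m=1}^{n-1} σ₃(m) σ₅(n−m)`. -/
theorem eleven_sigma9_eq (n : ℕ) (hn : 0 < n) :
    11 * (∑ d ∈ n.divisors, (d : ℤ) ^ 9) =
      21 * (∑ d ∈ n.divisors, (d : ℤ) ^ 5) - 10 * (∑ d ∈ n.divisors, (d : ℤ) ^ 3) +
        5040 * ∑ m ∈ Finset.Ioo 0 n,
          (∑ d ∈ m.divisors, (d : ℤ) ^ 3) * (∑ d ∈ (n - m).divisors, (d : ℤ) ^ 5) := by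
  have h := congrArg (PowerSeries.coeff n) <|
    (ModularForm.qExpansion_mul one_pos one_mem_strictPeriods_SL E₄ E₆).symm.trans
      (congrArg (qExpansion 1) E₄_mul_E₆)
  rw [PowerSeries.coeff_mul_of_coeff_zero_eq_one (E_qExpansion_coeff_zero _ ⟨2, rfl⟩)
      (E_qExpansion_coeff_zero _ ⟨3, rfl⟩) hn, E₄_qExpansion_coeff hn, E₆_qExpansion_coeff hn,
    E₁₀_qExpansion_coeff hn, Finset.sum_congr rfl fun m hm => by
      rw [E₄_qExpansion_coeff (Finset.mem_Ioo.mp hm).1, E₆_qExpansion_coeff (by grind),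
        mul_mul_mul_comm], ← Finset.mul_sum] at h
  simp only [ArithmeticFunction.sigma_apply] at h
  apply Int.cast_injective (α := ℂ)
  push_cast at h ⊢
  linear_combination h / 24
end

section
/- The only positive even integers k with k ≥ 2 such that 2k/B_k is an integer are k ∈ {2, 4, 6, 8, 10, 14}, where B_k is the k-th Bernoulli number. -/
/-!
For even `k = 2n`, Euler's formula `ζ(2n) = (-1)^(n+1) (2π)^(2n) B_{2n} / (2 (2n)!)` together with
`ζ(2n) ≥ 1` gives `|B_k| ≥ 2 k! / (2π)^k`, and `k! > k (2π)^k` once `k ≥ 18`. Hence `|B_k| > 2k`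
for even `k ≥ 18`, so `2k / B_k` lies strictly between `-1` and `1` and is nonzero. The cases
`k ≤ 16` are settled by computing the Bernoulli numbers.
-/

open Real Nat Finset

theorem mul_pow_lt_factorial_of_le {c : ℝ} {N n : ℕ} (hc : 0 ≤ c) (hcN : c ≤ N)
    (hN : N * c ^ N < N !) (hn : N ≤ n) : n * c ^ n < n ! := by
  induction n, hn using Nat.le_induction with
  | base => exact hN
  | succ n hn ih =>
    have hcn : c * c ^ n ≤ n * c ^ n := by gcongr; exact hcN.trans (mod_cast hn)
    calc ((n + 1 : ℕ) : ℝ) * c ^ (n + 1) = (n + 1) * (c * c ^ n) := by push_cast; ring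
      _ < (n + 1) * n ! := by gcongr; linarith
      _ = (n + 1)! := by push_cast [Nat.factorial_succ]; ring

theorem mul_two_pi_pow_lt_factorial {n : ℕ} (hn : 18 ≤ n) : n * (2 * π) ^ n < n ! := by
  have h2pi : 2 * π < 6.3 := by linarith [pi_lt_d2]
  refine mul_pow_lt_factorial_of_le (by positivity) (by push_cast; linarith) ?_ hn
  push_cast
  calc (18 : ℝ) * (2 * π) ^ 18 < 18 * 6.3 ^ 18 := by gcongr
    _ < ((18 ! : ℕ) : ℝ) := by norm_num [Nat.factorial]

theorem two_mul_factorial_le_two_pi_pow_mul_abs_bernoulli {n : ℕ} (hn : n ≠ 0) :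
    2 * ((2 * n)! : ℝ) ≤ (2 * π) ^ (2 * n) * |(bernoulli (2 * n) : ℝ)| := by
  have h2 : (2 : ℝ) ^ (2 * n) = 2 * 2 ^ (2 * n - 1) := by rw [mul_pow_sub_one (by omega)]
  have hzeta_ge_one : 1 ≤ (2 * π) ^ (2 * n) * |(bernoulli (2 * n) : ℝ)| / (2 * (2 * n)!) := by
    calc (1 : ℝ) ≤ _ := by simpa using le_hasSum (hasSum_zeta_nat hn) 1 fun _ _ ↦ by positivity
      _ ≤ |_| := le_abs_self _
      _ = _ := by
        rw [mul_pow, h2]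
        simp only [abs_div, abs_mul, abs_pow, abs_neg, abs_one, one_pow, abs_ofNat, one_mul,
          abs_of_pos pi_pos, abs_cast]
        ring
  rwa [one_le_div (by positivity)] at hzeta_ge_one

theorem two_mul_lt_abs_bernoulli {n : ℕ} (hn : 9 ≤ n) :
    2 * ((2 * n : ℕ) : ℚ) < |bernoulli (2 * n)| := by
  have hfact := mul_two_pi_pow_lt_factorial (n := 2 * n) (by omega)
  have hbern := two_mul_factorial_le_two_pi_pow_mul_abs_bernoulli (n := n) (by omega)
  have hscaled : (2 * π) ^ (2 * n) * (2 * ((2 * n : ℕ) : ℝ)) <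
      (2 * π) ^ (2 * n) * |(bernoulli (2 * n) : ℝ)| := by
    linarith
  exact_mod_cast lt_of_mul_lt_mul_left hscaled (by positivity)

theorem not_exists_intCast_eq_div_of_abs_lt {K : Type*} [Field K] [LinearOrder K]
    [IsStrictOrderedRing K] {a b : K} (ha : a ≠ 0) (hab : |a| < |b|) :
    ¬ ∃ z : ℤ, a / b = z := by
  rintro ⟨z, hz⟩
  have hb : b ≠ 0 := by rintro rfl; simp only [abs_zero] at hab; exact (abs_nonneg a).not_gt hab
  have hz1 : |(z : K)| < 1 := by rwa [← hz, abs_div, div_lt_one (abs_pos.2 hb)]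
  have hz0 : z = 0 := Int.abs_lt_one_iff.1 (mod_cast hz1)
  simp [hz0, ha, hb] at hz

theorem exists_intCast_eq_iff_fract_eq_zero {R : Type*} [Ring R] [LinearOrder R] [FloorRing R]
    [IsOrderedRing R] {a : R} : (∃ z : ℤ, a = z) ↔ Int.fract a = 0 := by
  simp only [Int.fract_eq_zero_iff, Set.mem_range, eq_comm]

theorem bernoulli'_six : bernoulli' 6 = 1 / 42 := by
  rw [bernoulli'_def]
  norm_num [sum_range_succ, Nat.choose, bernoulli'_eq_zero_of_odd, bernoulli'_four]

theorem bernoulli'_eight : bernoulli' 8 = -1 / 30 := by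
  rw [bernoulli'_def]
  norm_num [sum_range_succ, Nat.choose, bernoulli'_eq_zero_of_odd, bernoulli'_four,
    bernoulli'_six]

theorem bernoulli'_ten : bernoulli' 10 = 5 / 66 := by
  rw [bernoulli'_def]
  norm_num [sum_range_succ, Nat.choose, bernoulli'_eq_zero_of_odd, bernoulli'_four,
    bernoulli'_six, bernoulli'_eight]

theorem bernoulli'_twelve : bernoulli' 12 = -691 / 2730 := by
  rw [bernoulli'_def]
  norm_num [sum_range_succ, Nat.choose, bernoulli'_eq_zero_of_odd, bernoulli'_four,
    bernoulli'_six, bernoulli'_eight, bernoulli'_ten]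

theorem bernoulli'_fourteen : bernoulli' 14 = 7 / 6 := by
  rw [bernoulli'_def]
  norm_num [sum_range_succ, Nat.choose, bernoulli'_eq_zero_of_odd, bernoulli'_four,
    bernoulli'_six, bernoulli'_eight, bernoulli'_ten, bernoulli'_twelve]

theorem bernoulli'_sixteen : bernoulli' 16 = -3617 / 510 := by
  rw [bernoulli'_def]
  norm_num [sum_range_succ, Nat.choose, bernoulli'_eq_zero_of_odd, bernoulli'_four,
    bernoulli'_six, bernoulli'_eight, bernoulli'_ten, bernoulli'_twelve, bernoulli'_fourteen]

/-- The only positive even integers `k ≥ 2` such that `2k/B_k` is an integer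
are `k ∈ {2, 4, 6, 8, 10, 14}`. -/
theorem twoK_div_bernoulli_integral_iff (k : ℕ) (hke : Even k) (hk : 2 ≤ k) :
    (∃ z : ℤ, (2 * k : ℚ) / bernoulli k = z) ↔
      k ∈ ({2, 4, 6, 8, 10, 14} : Finset ℕ) := by
  obtain ⟨n, rfl⟩ := hke.two_dvd
  rcases lt_or_ge n 9 with hn | hn
  · have hn1 : 1 ≤ n := by omega
    rw [exists_intCast_eq_iff_fract_eq_zero]
    interval_cases n <;>
      norm_num [bernoulli_eq_bernoulli'_of_ne_one, bernoulli'_two, bernoulli'_four, bernoulli'_six,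
        bernoulli'_eight, bernoulli'_ten, bernoulli'_twelve, bernoulli'_fourteen, bernoulli'_sixteen]
  · refine iff_of_false (not_exists_intCast_eq_div_of_abs_lt (by positivity) ?_) ?_
    · rw [abs_of_pos (by positivity)]
      exact two_mul_lt_abs_bernoulli hn
    · simp only [Finset.mem_insert, Finset.mem_singleton]
      omega
end

section
/- For positive even k, the denominator of the Bernoulli number B_k (in lowest terms) is the product of all primes p such that (p−1) divides k. -/
/-! By Rado's form of von Staudt–Clausen (`Bernoulli.vonStaudt_clausen`), `B_{2m} + ∑ 1/p` over
the primes with `(p - 1) ∣ 2m` is an integer, so `B_{2m}` has the denominator of that sum; the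
reciprocals of distinct primes have pairwise coprime denominators, so that denominator is `∏ p`. -/

open Finset

theorem Rat.den_add_of_coprime {x y : ℚ} (h : x.den.Coprime y.den) :
    (x + y).den = x.den * y.den := by
  have hx : x.den ∣ (x + y).den := h.dvd_of_dvd_mul_right <| by
    simpa using Rat.sub_den_dvd (x + y) y
  have hy : y.den ∣ (x + y).den := h.symm.dvd_of_dvd_mul_right <| by
    simpa [mul_comm] using Rat.sub_den_dvd (x + y) x
  exact Nat.dvd_antisymm (Rat.add_den_dvd x y) (h.mul_dvd_of_dvd_of_dvd hx hy)

theorem Rat.den_sum_of_pairwise_coprime {ι : Type*} [DecidableEq ι] {s : Finset ι} {f : ι → ℚ}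
    (h : (s : Set ι).Pairwise fun i j => (f i).den.Coprime (f j).den) :
    (∑ i ∈ s, f i).den = ∏ i ∈ s, (f i).den := by
  induction s using Finset.induction_on with
  | empty => simp
  | insert a s ha ih =>
    rw [coe_insert, Set.pairwise_insert] at h
    have hcop : (f a).den.Coprime (∑ i ∈ s, f i).den := by
      rw [ih h.1]
      exact Nat.Coprime.prod_right fun i hi => (h.2 i hi (ne_of_mem_of_not_mem hi ha).symm).1
    rw [sum_insert ha, prod_insert ha, Rat.den_add_of_coprime hcop, ih h.1]

theorem Rat.den_sum_one_div_primes {s : Finset ℕ} (hs : ∀ p ∈ s, p.Prime) :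
    (∑ p ∈ s, (1 : ℚ) / p).den = ∏ p ∈ s, p := by
  have hden : ∀ p ∈ s, ((1 : ℚ) / p).den = p := fun p hp => by
    simp [(hs p hp).ne_zero]
  rw [Rat.den_sum_of_pairwise_coprime, prod_congr rfl hden]
  intro p hp q hq hpq
  rw [hden p hp, hden q hq]
  exact (Nat.coprime_primes (hs p hp) (hs q hq)).mpr hpq

theorem von_staudt_clausen_denominator_general (k : ℕ) (hke : Even k) :
    (bernoulli k).den =
      ∏ p ∈ (Finset.range (k + 2)).filter (fun p => Nat.Prime p ∧ (p - 1) ∣ k), p := by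
  obtain ⟨m, rfl⟩ := even_iff_two_dvd.mp hke
  obtain ⟨n, hn⟩ := Bernoulli.vonStaudt_clausen m
  rw [← Rat.den_sum_one_div_primes fun p hp => (mem_filter.mp hp).2.1,
    eq_sub_of_add_eq hn.symm, Rat.intCast_sub_den]

/-- Von Staudt–Clausen: for positive even `k`, the denominator of `B_k` is the
product of all primes `p` with `(p-1) ∣ k`. -/
theorem von_staudt_clausen_denominator (k : ℕ) (hk : 0 < k) (hke : Even k) :
    (bernoulli k).den =
      ∏ p ∈ (Finset.range (k + 2)).filter (fun p => Nat.Prime p ∧ (p - 1) ∣ k), p :=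
  von_staudt_clausen_denominator_general k hke
end

section
/- The only square-free integers N > 1 such that 24 / Π_{p | N}(1 − p) is an integer are N ∈ {2, 3, 5, 6, 7, 10, 13, 14, 15, 21, 26, 30, 35, 39, 42, 70, 78}, where the product is over primes p dividing N. -/
/-!
For squarefree `N` the product `∏_{p ∣ N} (1 - p)` is `±φ(N)`, so the quotient is an integer
exactly when `φ(N) ∣ 24`. Every prime `p ∣ N` then has `p - 1 ∣ φ(N) ∣ 24`, which forces
`p ∈ {2, 3, 5, 7, 13}`; the squarefree `N` built from these primes are checked by computation.
-/

open Finset Nat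

theorem Nat.totient_eq_prod_primeFactors_sub_one {n : ℕ} (hn : Squarefree n) :
    φ n = ∏ p ∈ n.primeFactors, (p - 1) := by
  have h := totient_mul_prod_primeFactors n
  rw [prod_primeFactors_of_squarefree hn, mul_comm] at h
  exact Nat.eq_of_mul_eq_mul_left (Nat.pos_of_ne_zero hn.ne_zero) h

theorem Nat.sub_one_dvd_totient_of_mem_primeFactors {n p : ℕ} (hp : p ∈ n.primeFactors) :
    p - 1 ∣ φ n :=
  totient_prime (prime_of_mem_primeFactors hp) ▸ totient_dvd_of_dvd (dvd_of_mem_primeFactors hp)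

theorem Nat.natAbs_prod_one_sub_primeFactors (n : ℕ) :
    (∏ p ∈ n.primeFactors, (1 - (p : ℤ))).natAbs = ∏ p ∈ n.primeFactors, (p - 1) := by
  refine (map_prod Int.natAbsHom _ _).trans (prod_congr rfl fun p hp => ?_)
  have := (prime_of_mem_primeFactors hp).one_lt
  change (1 - (p : ℤ)).natAbs = p - 1
  omega

theorem Int.exists_intCast_eq_div_iff_dvd {a b : ℤ} (hb : b ≠ 0) :
    (∃ z : ℤ, (a : ℚ) / b = z) ↔ b ∣ a := by
  constructor
  · rintro ⟨z, hz⟩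
    rw [div_eq_iff (by exact_mod_cast hb)] at hz
    exact ⟨z, by exact_mod_cast hz.trans (mul_comm _ _)⟩
  · rintro ⟨c, rfl⟩
    exact ⟨c, by push_cast; field_simp⟩

theorem Nat.exists_intCast_eq_div_prod_one_sub_iff_totient_dvd {n : ℕ} (hn : Squarefree n)
    (a : ℕ) : (∃ z : ℤ, (a : ℚ) / ∏ p ∈ n.primeFactors, (1 - (p : ℚ)) = z) ↔ φ n ∣ a := by
  have hne : ∏ p ∈ n.primeFactors, (1 - (p : ℤ)) ≠ 0 := by
    rw [← Int.natAbs_ne_zero, natAbs_prod_one_sub_primeFactors,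
      ← totient_eq_prod_primeFactors_sub_one hn]
    exact (totient_pos.2 (Nat.pos_of_ne_zero hn.ne_zero)).ne'
  have h := Int.exists_intCast_eq_div_iff_dvd (a := a) hne
  push_cast at h
  rw [h, ← Int.natAbs_dvd_natAbs, natAbs_prod_one_sub_primeFactors,
    ← totient_eq_prod_primeFactors_sub_one hn, Int.natAbs_natCast]

theorem Nat.Prime.mem_of_sub_one_dvd_24 {p : ℕ} (hp : p.Prime) (h : p - 1 ∣ 24) :
    p ∈ ({2, 3, 5, 7, 13} : Finset ℕ) := by
  have hle : p ≤ 25 := by have := Nat.le_of_dvd (by norm_num) h; omega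
  interval_cases p <;> simp_all +decide

theorem prod_mem_of_prod_sub_one_dvd_24 :
    ∀ s ∈ ({2, 3, 5, 7, 13} : Finset ℕ).powerset, ∏ p ∈ s, (p - 1) ∣ 24 → ∏ p ∈ s, p ≠ 1 →
      ∏ p ∈ s, p ∈ ({2, 3, 5, 6, 7, 10, 13, 14, 15, 21, 26, 30, 35, 39, 42, 70, 78} : Finset ℕ) := by
  decide

theorem totient_dvd_24_of_mem :
    ∀ n ∈ ({2, 3, 5, 6, 7, 10, 13, 14, 15, 21, 26, 30, 35, 39, 42, 70, 78} : Finset ℕ),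
      φ n ∣ 24 := by
  decide

theorem Squarefree.totient_dvd_24_iff {N : ℕ} (hsf : Squarefree N) (hN : N ≠ 1) :
    φ N ∣ 24 ↔
      N ∈ ({2, 3, 5, 6, 7, 10, 13, 14, 15, 21, 26, 30, 35, 39, 42, 70, 78} : Finset ℕ) := by
  refine ⟨fun h => ?_, totient_dvd_24_of_mem N⟩
  have hsub : N.primeFactors ⊆ {2, 3, 5, 7, 13} := fun p hp =>
    (prime_of_mem_primeFactors hp).mem_of_sub_one_dvd_24
      ((sub_one_dvd_totient_of_mem_primeFactors hp).trans h)
  rw [totient_eq_prod_primeFactors_sub_one hsf] at h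
  rw [← prod_primeFactors_of_squarefree hsf] at hN ⊢
  exact prod_mem_of_prod_sub_one_dvd_24 _ (mem_powerset.2 hsub) h hN

/-- The only square-free `N > 1` such that `24 / ∏_{p ∣ N} (1 − p)` is an integer are
`N ∈ {2, 3, 5, 6, 7, 10, 13, 14, 15, 21, 26, 30, 35, 39, 42, 70, 78}`. -/
theorem squarefree_level_integral_iff (N : ℕ) (hN : 1 < N) (hsf : Squarefree N) :
    (∃ z : ℤ, (24 : ℚ) / (∏ p ∈ N.primeFactors, (1 - (p : ℚ))) = z) ↔
      N ∈ ({2, 3, 5, 6, 7, 10, 13, 14, 15, 21, 26, 30, 35, 39, 42, 70, 78} : Finset ℕ) := by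
  have h := exists_intCast_eq_div_prod_one_sub_iff_totient_dvd hsf 24
  rw [Nat.cast_ofNat] at h
  rw [h, hsf.totient_dvd_24_iff hN.ne']
end

section
/- Let k ≥ 3, and let s, t be complex numbers of absolute value 2^{k−1} (with st ≠ 0), and α, β complex numbers with 4α and 4β algebraic integers divisible by 2 (i.e., 2 | 4α and 2 | 4β in the ring of algebraic integers). Then the equation 2^{2k−1}·u·v·(α+β) − 2^{k−1}(vα + uβ) = 1 has no solution with u, v roots of unity. -/
lemma isIntegral_of_pow_eq_one {u : ℂ} {n : ℕ} (hn : 0 < n) (h : u ^ n = 1) :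
    IsIntegral ℤ u := by
  refine ⟨Polynomial.X ^ n - Polynomial.C 1, ?_, ?_⟩
  · exact Polynomial.monic_X_pow_sub_C 1 hn.ne'
  · simp [Polynomial.eval₂, h]

lemma half_not_integral : ¬ IsIntegral ℤ ((1 : ℂ) / 2) := by
  intro h
  have h2 : ((1 : ℂ) / 2) = algebraMap ℚ ℂ ((1 : ℚ) / 2) := by norm_num
  rw [h2, isIntegral_algebraMap_iff (algebraMap ℚ ℂ).injective] at h
  obtain ⟨y, hy⟩ := IsIntegrallyClosed.isIntegral_iff.mp h
  have : (y : ℚ) = 1 / 2 := hy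
  have h1 : (2 : ℚ) * y = 1 := by rw [this]; ring
  have : (2 * y : ℤ) = 1 := by exact_mod_cast h1
  omega

/-- 2-adic obstruction: for `k ≥ 3` and `α, β` with `4α, 4β` algebraic integers
divisible by `2` (i.e. `2α, 2β` algebraic integers), the equation
`2^{2k−1} u v (α+β) − 2^{k−1} (vα + uβ) = 1` has no solution with `u, v`
roots of unity. -/
theorem no_solution_two_adic_obstruction (k : ℕ) (hk : 3 ≤ k) (α β : ℂ)
    (hα4 : IsIntegral ℤ (4 * α)) (hα2 : IsIntegral ℤ (2 * α))
    (hβ4 : IsIntegral ℤ (4 * β)) (hβ2 : IsIntegral ℤ (2 * β)) :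
    ¬ ∃ u v : ℂ, (∃ n : ℕ, 0 < n ∧ u ^ n = 1) ∧ (∃ m : ℕ, 0 < m ∧ v ^ m = 1) ∧
      2 ^ (2 * k - 1) * u * v * (α + β) - 2 ^ (k - 1) * (v * α + u * β) = 1 := by
  rintro ⟨u, v, ⟨n, hn, hun⟩, ⟨m, hm, hvm⟩, heq⟩
  have hu : IsIntegral ℤ u := isIntegral_of_pow_eq_one hn hun
  have hv : IsIntegral ℤ v := isIntegral_of_pow_eq_one hm hvm
  have h2 : IsIntegral ℤ (2 : ℂ) := isIntegral_algebraMap (x := (2 : ℤ))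
  set w : ℂ := 2 ^ (2 * k - 3) * u * v * (2 * α + 2 * β)
      - 2 ^ (k - 3) * (v * (2 * α) + u * (2 * β)) with hw
  have hwint : IsIntegral ℤ w := by
    apply IsIntegral.sub
    · exact (((h2.pow _).mul hu).mul hv).mul (hα2.add hβ2)
    · exact (h2.pow _).mul ((hv.mul hα2).add (hu.mul hβ2))
  have hkey : (2 : ℂ) * w = 1 := by
    rw [hw, ← heq]
    have e1 : 2 * k - 1 = (2 * k - 3) + 2 := by omega
    have e2 : k - 1 = (k - 3) + 2 := by omega
    rw [e1, e2]
    ring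
  have hwhalf : w = (1 : ℂ) / 2 := by
    linear_combination hkey / 2
  exact half_not_integral (hwhalf ▸ hwint)
end
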